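/- The semidihedral-type group H of order 16 given as the semidirect product of a cyclic group ⟨a⟩ of order 8 by a cyclic group ⟨b⟩ of order 2 acting by b⁻¹ab = a³ (i.e., (ℤ/8ℤ) ⋊ (ℤ/2ℤ) with the nontrivial element acting as multiplication by 3) has the cut-property. -/

import Mathlib

def HasCut (G : Type*) [Group G] : Prop :=
  ∀ u : (MonoidAlgebra ℤ G)ˣ,
    (↑u : MonoidAlgebra ℤ G) ∈ Subring.center (MonoidAlgebra ℤ G) →
      ∃ g ∈ Subgroup.center G,
        (↑u : MonoidAlgebra ℤ G) = MonoidAlgebra.of ℤ G g ∨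
        (↑u : MonoidAlgebra ℤ G) = -(MonoidAlgebra.of ℤ G g)

/-- The automorphism `x ↦ 3x` of `ℤ/8ℤ`, as an automorphism of the (multiplicatively
written) cyclic group of order 8. -/
def aut3 : MulAut (Multiplicative (ZMod 8)) :=
  AddEquiv.toMultiplicative
    { toFun := fun x => 3 * x
      invFun := fun x => 3 * x
      left_inv := by decide
      right_inv := by decide
      map_add' := by decide }

/-- The action of `ℤ/2ℤ` on `ℤ/8ℤ` whose nontrivial element acts by `x ↦ 3x`. -/
def phi : Multiplicative (ZMod 2) →* MulAut (Multiplicative (ZMod 8)) where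
  toFun x := if Multiplicative.toAdd x = 0 then 1 else aut3
  map_one' := by simp
  map_mul' := by
    have key : aut3 * aut3 = 1 := by
      apply MulEquiv.ext
      decide
    have h2 : ∀ z : ZMod 2, z = 0 ∨ z = 1 := by decide
    intro x y
    rcases h2 (Multiplicative.toAdd x) with hx | hx <;>
      rcases h2 (Multiplicative.toAdd y) with hy | hy <;>
        simp [toAdd_mul, hx, hy, key,
          (by decide : (1 : ZMod 2) + 1 = 0), (by decide : (1 : ZMod 2) ≠ 0)]

/-- The semidihedral-type group `(ℤ/8ℤ) ⋊ (ℤ/2ℤ)` of order 16,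
`⟨a, b | a⁸ = b² = 1, b⁻¹ab = a³⟩`. -/
abbrev SD16 := Multiplicative (ZMod 8) ⋊[phi] Multiplicative (ZMod 2)


/-! ### Auxiliary infrastructure -/

def sdEquiv : SD16 ≃ Multiplicative (ZMod 8) × Multiplicative (ZMod 2) where
  toFun g := (g.left, g.right)
  invFun p := ⟨p.1, p.2⟩
  left_inv _ := rfl
  right_inv _ := rfl

instance : DecidableEq SD16 := sdEquiv.decidableEq
instance sdFintype : Fintype SD16 := Fintype.ofEquiv _ sdEquiv.symm

/-- shorthand for elements of SD16 -/
def el (x : ZMod 8) (y : ZMod 2) : SD16 := ⟨Multiplicative.ofAdd x, Multiplicative.ofAdd y⟩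

def sdList : List SD16 :=
  [el 0 0, el 1 0, el 2 0, el 3 0, el 4 0, el 5 0, el 6 0, el 7 0,
   el 0 1, el 1 1, el 2 1, el 3 1, el 4 1, el 5 1, el 6 1, el 7 1]

theorem univ_eq : (Finset.univ : Finset SD16) = ⟨↑sdList, by decide⟩ := by decide

theorem sd_sum {M : Type*} [AddCommMonoid M] (f : SD16 → M) :
    ∑ g : SD16, f g =
      f (el 0 0) + f (el 1 0) + f (el 2 0) + f (el 3 0) + f (el 4 0) + f (el 5 0) +
      f (el 6 0) + f (el 7 0) + f (el 0 1) + f (el 1 1) + f (el 2 1) + f (el 3 1) +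
      f (el 4 1) + f (el 5 1) + f (el 6 1) + f (el 7 1) := by
  rw [Finset.sum, univ_eq]
  show Multiset.sum (Multiset.map f (↑sdList)) = _
  simp [sdList]
  abel

theorem all16 : ∀ g : SD16, g = el 0 0 ∨ g = el 1 0 ∨ g = el 2 0 ∨ g = el 3 0 ∨ g = el 4 0 ∨
    g = el 5 0 ∨ g = el 6 0 ∨ g = el 7 0 ∨ g = el 0 1 ∨ g = el 1 1 ∨ g = el 2 1 ∨
    g = el 3 1 ∨ g = el 4 1 ∨ g = el 5 1 ∨ g = el 6 1 ∨ g = el 7 1 := by decide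

/-! ### Representations over ℤ -/

def Cmat : Matrix (Fin 4) (Fin 4) ℤ := !![0,0,0,-1; 1,0,0,0; 0,1,0,0; 0,0,1,0]
def Bmat : Matrix (Fin 4) (Fin 4) ℤ := !![1,0,0,0; 0,0,0,1; 0,0,-1,0; 0,1,0,0]

set_option maxHeartbeats 4000000 in
/-- the rational 4-dimensional irreducible representation of SD16 -/
def rho4 : SD16 →* Matrix (Fin 4) (Fin 4) ℤ where
  toFun g := Cmat ^ (Multiplicative.toAdd g.left).val * Bmat ^ (Multiplicative.toAdd g.right).val
  map_one' := by decide
  map_mul' := by decide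

def Amat : Matrix (Fin 2) (Fin 2) ℤ := !![0,-1; 1,0]
def B2mat : Matrix (Fin 2) (Fin 2) ℤ := !![1,0; 0,-1]

set_option maxHeartbeats 4000000 in
/-- the rational 2-dimensional irreducible representation of SD16 -/
def rho2 : SD16 →* Matrix (Fin 2) (Fin 2) ℤ where
  toFun g := Amat ^ (Multiplicative.toAdd g.left).val * B2mat ^ (Multiplicative.toAdd g.right).val
  map_one' := by decide
  map_mul' := by decide

set_option maxHeartbeats 1000000 in
def chiA : SD16 →* ℤ where
  toFun g := (-1) ^ (Multiplicative.toAdd g.left).val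
  map_one' := by decide
  map_mul' := by decide

set_option maxHeartbeats 1000000 in
def chiB : SD16 →* ℤ where
  toFun g := (-1) ^ (Multiplicative.toAdd g.right).val
  map_one' := by decide
  map_mul' := by decide

set_option maxHeartbeats 1000000 in
def chiAB : SD16 →* ℤ where
  toFun g := (-1) ^ ((Multiplicative.toAdd g.left).val + (Multiplicative.toAdd g.right).val)
  map_one' := by decide
  map_mul' := by decide

set_option maxHeartbeats 2000000 in
theorem lift_eval {R : Type*} [Ring R] [Algebra ℤ R] (F : SD16 →* R) (f : MonoidAlgebra ℤ SD16) :
    MonoidAlgebra.lift ℤ R SD16 F f =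
      f.coeff (el 0 0) • F (el 0 0) + f.coeff (el 1 0) • F (el 1 0) + f.coeff (el 2 0) • F (el 2 0) +
      f.coeff (el 3 0) • F (el 3 0) + f.coeff (el 4 0) • F (el 4 0) + f.coeff (el 5 0) • F (el 5 0) +
      f.coeff (el 6 0) • F (el 6 0) + f.coeff (el 7 0) • F (el 7 0) + f.coeff (el 0 1) • F (el 0 1) +
      f.coeff (el 1 1) • F (el 1 1) + f.coeff (el 2 1) • F (el 2 1) + f.coeff (el 3 1) • F (el 3 1) +
      f.coeff (el 4 1) • F (el 4 1) + f.coeff (el 5 1) • F (el 5 1) + f.coeff (el 6 1) • F (el 6 1) +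
      f.coeff (el 7 1) • F (el 7 1) := by
  have h1 : MonoidAlgebra.lift ℤ R SD16 F f = ∑ i : SD16, algebraMap ℤ R (f.coeff i) * F i := by
    rw [MonoidAlgebra.lift_apply']
    exact Finsupp.sum_fintype _ _ (fun g => by simp)
  rw [h1, sd_sum (fun i => algebraMap ℤ R (f.coeff i) * F i)]
  simp only [algebraMap_int_eq, eq_intCast, zsmul_eq_mul]

theorem coeff_conj (w : MonoidAlgebra ℤ SD16) (hw : w ∈ Subring.center (MonoidAlgebra ℤ SD16))
    {g h k : SD16} (hk : g * h * g⁻¹ = k) : w.coeff k = w.coeff h := by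
  have h1 := Subring.mem_center_iff.1 hw (MonoidAlgebra.single g 1)
  have h2 := congrArg (fun f : MonoidAlgebra ℤ SD16 => f.coeff (g * h)) h1
  simp only [MonoidAlgebra.coeff_single_mul_apply, MonoidAlgebra.coeff_mul_single_apply, one_mul, mul_one,
    inv_mul_cancel_left] at h2
  rw [← hk]
  exact h2.symm

set_option maxHeartbeats 1000000 in
theorem m4_0_0 : rho4 (el 0 0) = (!![1, 0, 0, 0; 0, 1, 0, 0; 0, 0, 1, 0; 0, 0, 0, 1] : Matrix (Fin 4) (Fin 4) ℤ) := by decide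
set_option maxHeartbeats 1000000 in
theorem m4_1_0 : rho4 (el 1 0) = (!![0, 0, 0, -1; 1, 0, 0, 0; 0, 1, 0, 0; 0, 0, 1, 0] : Matrix (Fin 4) (Fin 4) ℤ) := by decide
set_option maxHeartbeats 1000000 in
theorem m4_2_0 : rho4 (el 2 0) = (!![0, 0, -1, 0; 0, 0, 0, -1; 1, 0, 0, 0; 0, 1, 0, 0] : Matrix (Fin 4) (Fin 4) ℤ) := by decide
set_option maxHeartbeats 1000000 in
theorem m4_3_0 : rho4 (el 3 0) = (!![0, -1, 0, 0; 0, 0, -1, 0; 0, 0, 0, -1; 1, 0, 0, 0] : Matrix (Fin 4) (Fin 4) ℤ) := by decide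
set_option maxHeartbeats 1000000 in
theorem m4_4_0 : rho4 (el 4 0) = (!![-1, 0, 0, 0; 0, -1, 0, 0; 0, 0, -1, 0; 0, 0, 0, -1] : Matrix (Fin 4) (Fin 4) ℤ) := by decide
set_option maxHeartbeats 1000000 in
theorem m4_5_0 : rho4 (el 5 0) = (!![0, 0, 0, 1; -1, 0, 0, 0; 0, -1, 0, 0; 0, 0, -1, 0] : Matrix (Fin 4) (Fin 4) ℤ) := by decide
set_option maxHeartbeats 1000000 in
theorem m4_6_0 : rho4 (el 6 0) = (!![0, 0, 1, 0; 0, 0, 0, 1; -1, 0, 0, 0; 0, -1, 0, 0] : Matrix (Fin 4) (Fin 4) ℤ) := by decide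
set_option maxHeartbeats 1000000 in
theorem m4_7_0 : rho4 (el 7 0) = (!![0, 1, 0, 0; 0, 0, 1, 0; 0, 0, 0, 1; -1, 0, 0, 0] : Matrix (Fin 4) (Fin 4) ℤ) := by decide
set_option maxHeartbeats 1000000 in
theorem m4_0_1 : rho4 (el 0 1) = (!![1, 0, 0, 0; 0, 0, 0, 1; 0, 0, -1, 0; 0, 1, 0, 0] : Matrix (Fin 4) (Fin 4) ℤ) := by decide
set_option maxHeartbeats 1000000 in
theorem m4_1_1 : rho4 (el 1 1) = (!![0, -1, 0, 0; 1, 0, 0, 0; 0, 0, 0, 1; 0, 0, -1, 0] : Matrix (Fin 4) (Fin 4) ℤ) := by decide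
set_option maxHeartbeats 1000000 in
theorem m4_2_1 : rho4 (el 2 1) = (!![0, 0, 1, 0; 0, -1, 0, 0; 1, 0, 0, 0; 0, 0, 0, 1] : Matrix (Fin 4) (Fin 4) ℤ) := by decide
set_option maxHeartbeats 1000000 in
theorem m4_3_1 : rho4 (el 3 1) = (!![0, 0, 0, -1; 0, 0, 1, 0; 0, -1, 0, 0; 1, 0, 0, 0] : Matrix (Fin 4) (Fin 4) ℤ) := by decide
set_option maxHeartbeats 1000000 in
theorem m4_4_1 : rho4 (el 4 1) = (!![-1, 0, 0, 0; 0, 0, 0, -1; 0, 0, 1, 0; 0, -1, 0, 0] : Matrix (Fin 4) (Fin 4) ℤ) := by decide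
set_option maxHeartbeats 1000000 in
theorem m4_5_1 : rho4 (el 5 1) = (!![0, 1, 0, 0; -1, 0, 0, 0; 0, 0, 0, -1; 0, 0, 1, 0] : Matrix (Fin 4) (Fin 4) ℤ) := by decide
set_option maxHeartbeats 1000000 in
theorem m4_6_1 : rho4 (el 6 1) = (!![0, 0, -1, 0; 0, 1, 0, 0; -1, 0, 0, 0; 0, 0, 0, -1] : Matrix (Fin 4) (Fin 4) ℤ) := by decide
set_option maxHeartbeats 1000000 in
theorem m4_7_1 : rho4 (el 7 1) = (!![0, 0, 0, 1; 0, 0, -1, 0; 0, 1, 0, 0; -1, 0, 0, 0] : Matrix (Fin 4) (Fin 4) ℤ) := by decide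
set_option maxHeartbeats 1000000 in
theorem m2_0_0 : rho2 (el 0 0) = (!![1, 0; 0, 1] : Matrix (Fin 2) (Fin 2) ℤ) := by decide
set_option maxHeartbeats 1000000 in
theorem m2_1_0 : rho2 (el 1 0) = (!![0, -1; 1, 0] : Matrix (Fin 2) (Fin 2) ℤ) := by decide
set_option maxHeartbeats 1000000 in
theorem m2_2_0 : rho2 (el 2 0) = (!![-1, 0; 0, -1] : Matrix (Fin 2) (Fin 2) ℤ) := by decide
set_option maxHeartbeats 1000000 in
theorem m2_3_0 : rho2 (el 3 0) = (!![0, 1; -1, 0] : Matrix (Fin 2) (Fin 2) ℤ) := by decide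
set_option maxHeartbeats 1000000 in
theorem m2_4_0 : rho2 (el 4 0) = (!![1, 0; 0, 1] : Matrix (Fin 2) (Fin 2) ℤ) := by decide
set_option maxHeartbeats 1000000 in
theorem m2_5_0 : rho2 (el 5 0) = (!![0, -1; 1, 0] : Matrix (Fin 2) (Fin 2) ℤ) := by decide
set_option maxHeartbeats 1000000 in
theorem m2_6_0 : rho2 (el 6 0) = (!![-1, 0; 0, -1] : Matrix (Fin 2) (Fin 2) ℤ) := by decide
set_option maxHeartbeats 1000000 in
theorem m2_7_0 : rho2 (el 7 0) = (!![0, 1; -1, 0] : Matrix (Fin 2) (Fin 2) ℤ) := by decide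
set_option maxHeartbeats 1000000 in
theorem m2_0_1 : rho2 (el 0 1) = (!![1, 0; 0, -1] : Matrix (Fin 2) (Fin 2) ℤ) := by decide
set_option maxHeartbeats 1000000 in
theorem m2_1_1 : rho2 (el 1 1) = (!![0, 1; 1, 0] : Matrix (Fin 2) (Fin 2) ℤ) := by decide
set_option maxHeartbeats 1000000 in
theorem m2_2_1 : rho2 (el 2 1) = (!![-1, 0; 0, 1] : Matrix (Fin 2) (Fin 2) ℤ) := by decide
set_option maxHeartbeats 1000000 in
theorem m2_3_1 : rho2 (el 3 1) = (!![0, -1; -1, 0] : Matrix (Fin 2) (Fin 2) ℤ) := by decide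
set_option maxHeartbeats 1000000 in
theorem m2_4_1 : rho2 (el 4 1) = (!![1, 0; 0, -1] : Matrix (Fin 2) (Fin 2) ℤ) := by decide
set_option maxHeartbeats 1000000 in
theorem m2_5_1 : rho2 (el 5 1) = (!![0, 1; 1, 0] : Matrix (Fin 2) (Fin 2) ℤ) := by decide
set_option maxHeartbeats 1000000 in
theorem m2_6_1 : rho2 (el 6 1) = (!![-1, 0; 0, 1] : Matrix (Fin 2) (Fin 2) ℤ) := by decide
set_option maxHeartbeats 1000000 in
theorem m2_7_1 : rho2 (el 7 1) = (!![0, -1; -1, 0] : Matrix (Fin 2) (Fin 2) ℤ) := by decide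
set_option maxHeartbeats 1000000 in
theorem CA0 : chiA (el 0 0) = (1 : ℤ) := by decide
set_option maxHeartbeats 1000000 in
theorem CA1 : chiA (el 1 0) = (-1 : ℤ) := by decide
set_option maxHeartbeats 1000000 in
theorem CA2 : chiA (el 2 0) = (1 : ℤ) := by decide
set_option maxHeartbeats 1000000 in
theorem CA3 : chiA (el 3 0) = (-1 : ℤ) := by decide
set_option maxHeartbeats 1000000 in
theorem CA4 : chiA (el 4 0) = (1 : ℤ) := by decide
set_option maxHeartbeats 1000000 in
theorem CA5 : chiA (el 5 0) = (-1 : ℤ) := by decide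
set_option maxHeartbeats 1000000 in
theorem CA6 : chiA (el 6 0) = (1 : ℤ) := by decide
set_option maxHeartbeats 1000000 in
theorem CA7 : chiA (el 7 0) = (-1 : ℤ) := by decide
set_option maxHeartbeats 1000000 in
theorem CA8 : chiA (el 0 1) = (1 : ℤ) := by decide
set_option maxHeartbeats 1000000 in
theorem CA9 : chiA (el 1 1) = (-1 : ℤ) := by decide
set_option maxHeartbeats 1000000 in
theorem CA10 : chiA (el 2 1) = (1 : ℤ) := by decide
set_option maxHeartbeats 1000000 in
theorem CA11 : chiA (el 3 1) = (-1 : ℤ) := by decide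
set_option maxHeartbeats 1000000 in
theorem CA12 : chiA (el 4 1) = (1 : ℤ) := by decide
set_option maxHeartbeats 1000000 in
theorem CA13 : chiA (el 5 1) = (-1 : ℤ) := by decide
set_option maxHeartbeats 1000000 in
theorem CA14 : chiA (el 6 1) = (1 : ℤ) := by decide
set_option maxHeartbeats 1000000 in
theorem CA15 : chiA (el 7 1) = (-1 : ℤ) := by decide
set_option maxHeartbeats 1000000 in
theorem CB0 : chiB (el 0 0) = (1 : ℤ) := by decide
set_option maxHeartbeats 1000000 in
theorem CB1 : chiB (el 1 0) = (1 : ℤ) := by decide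
set_option maxHeartbeats 1000000 in
theorem CB2 : chiB (el 2 0) = (1 : ℤ) := by decide
set_option maxHeartbeats 1000000 in
theorem CB3 : chiB (el 3 0) = (1 : ℤ) := by decide
set_option maxHeartbeats 1000000 in
theorem CB4 : chiB (el 4 0) = (1 : ℤ) := by decide
set_option maxHeartbeats 1000000 in
theorem CB5 : chiB (el 5 0) = (1 : ℤ) := by decide
set_option maxHeartbeats 1000000 in
theorem CB6 : chiB (el 6 0) = (1 : ℤ) := by decide
set_option maxHeartbeats 1000000 in
theorem CB7 : chiB (el 7 0) = (1 : ℤ) := by decide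
set_option maxHeartbeats 1000000 in
theorem CB8 : chiB (el 0 1) = (-1 : ℤ) := by decide
set_option maxHeartbeats 1000000 in
theorem CB9 : chiB (el 1 1) = (-1 : ℤ) := by decide
set_option maxHeartbeats 1000000 in
theorem CB10 : chiB (el 2 1) = (-1 : ℤ) := by decide
set_option maxHeartbeats 1000000 in
theorem CB11 : chiB (el 3 1) = (-1 : ℤ) := by decide
set_option maxHeartbeats 1000000 in
theorem CB12 : chiB (el 4 1) = (-1 : ℤ) := by decide
set_option maxHeartbeats 1000000 in
theorem CB13 : chiB (el 5 1) = (-1 : ℤ) := by decide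
set_option maxHeartbeats 1000000 in
theorem CB14 : chiB (el 6 1) = (-1 : ℤ) := by decide
set_option maxHeartbeats 1000000 in
theorem CB15 : chiB (el 7 1) = (-1 : ℤ) := by decide
set_option maxHeartbeats 1000000 in
theorem CC0 : chiAB (el 0 0) = (1 : ℤ) := by decide
set_option maxHeartbeats 1000000 in
theorem CC1 : chiAB (el 1 0) = (-1 : ℤ) := by decide
set_option maxHeartbeats 1000000 in
theorem CC2 : chiAB (el 2 0) = (1 : ℤ) := by decide
set_option maxHeartbeats 1000000 in
theorem CC3 : chiAB (el 3 0) = (-1 : ℤ) := by decide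
set_option maxHeartbeats 1000000 in
theorem CC4 : chiAB (el 4 0) = (1 : ℤ) := by decide
set_option maxHeartbeats 1000000 in
theorem CC5 : chiAB (el 5 0) = (-1 : ℤ) := by decide
set_option maxHeartbeats 1000000 in
theorem CC6 : chiAB (el 6 0) = (1 : ℤ) := by decide
set_option maxHeartbeats 1000000 in
theorem CC7 : chiAB (el 7 0) = (-1 : ℤ) := by decide
set_option maxHeartbeats 1000000 in
theorem CC8 : chiAB (el 0 1) = (-1 : ℤ) := by decide
set_option maxHeartbeats 1000000 in
theorem CC9 : chiAB (el 1 1) = (1 : ℤ) := by decide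
set_option maxHeartbeats 1000000 in
theorem CC10 : chiAB (el 2 1) = (-1 : ℤ) := by decide
set_option maxHeartbeats 1000000 in
theorem CC11 : chiAB (el 3 1) = (1 : ℤ) := by decide
set_option maxHeartbeats 1000000 in
theorem CC12 : chiAB (el 4 1) = (-1 : ℤ) := by decide
set_option maxHeartbeats 1000000 in
theorem CC13 : chiAB (el 5 1) = (1 : ℤ) := by decide
set_option maxHeartbeats 1000000 in
theorem CC14 : chiAB (el 6 1) = (-1 : ℤ) := by decide
set_option maxHeartbeats 1000000 in
theorem CC15 : chiAB (el 7 1) = (1 : ℤ) := by decide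

set_option maxHeartbeats 12000000 in
theorem hasCut_SD16 : HasCut SD16 := by
  intro u hu
  set cu : MonoidAlgebra ℤ SD16 := (↑u : MonoidAlgebra ℤ SD16) with hcu_def
  set cv : MonoidAlgebra ℤ SD16 := (↑u⁻¹ : MonoidAlgebra ℤ SD16) with hcv_def
  have huv : cu * cv = 1 := u.mul_inv
  have hvu : cv * cu = 1 := u.inv_mul
  have hcent := Subring.mem_center_iff.1 hu
  have hv : cv ∈ Subring.center (MonoidAlgebra ℤ SD16) := by
    rw [Subring.mem_center_iff]
    intro x
    calc x * cv = cv * cu * x * cv := by rw [hvu, one_mul]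
    _ = cv * (cu * x) * cv := by rw [mul_assoc cv]
    _ = cv * (x * cu) * cv := by rw [← hcent x]
    _ = cv * x * (cu * cv) := by rw [← mul_assoc, mul_assoc (cv * x)]
    _ = cv * x := by rw [huv, mul_one]
  -- conjugacy relations among coefficients
  have cj1 : el 0 1 * el 1 0 * (el 0 1)⁻¹ = el 3 0 := by decide
  have cj2 : el 0 1 * el 5 0 * (el 0 1)⁻¹ = el 7 0 := by decide
  have cj3 : el 0 1 * el 2 0 * (el 0 1)⁻¹ = el 6 0 := by decide
  have cj4 : el 1 0 * el 2 1 * (el 1 0)⁻¹ = el 0 1 := by decide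
  have cj5 : el 1 0 * el 4 1 * (el 1 0)⁻¹ = el 2 1 := by decide
  have cj6 : el 1 0 * el 6 1 * (el 1 0)⁻¹ = el 4 1 := by decide
  have cj7 : el 1 0 * el 3 1 * (el 1 0)⁻¹ = el 1 1 := by decide
  have cj8 : el 1 0 * el 5 1 * (el 1 0)⁻¹ = el 3 1 := by decide
  have cj9 : el 1 0 * el 7 1 * (el 1 0)⁻¹ = el 5 1 := by decide
  have eu1 := coeff_conj cu hu cj1; have eu2 := coeff_conj cu hu cj2
  have eu3 := coeff_conj cu hu cj3; have eu4 := coeff_conj cu hu cj4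
  have eu5 := coeff_conj cu hu cj5; have eu6 := coeff_conj cu hu cj6
  have eu7 := coeff_conj cu hu cj7; have eu8 := coeff_conj cu hu cj8
  have eu9 := coeff_conj cu hu cj9
  have ev1 := coeff_conj cv hv cj1; have ev2 := coeff_conj cv hv cj2
  have ev3 := coeff_conj cv hv cj3; have ev4 := coeff_conj cv hv cj4
  have ev5 := coeff_conj cv hv cj5; have ev6 := coeff_conj cv hv cj6
  have ev7 := coeff_conj cv hv cj7; have ev8 := coeff_conj cv hv cj8
  have ev9 := coeff_conj cv hv cj9
  -- matrix representation values
  -- linear character values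
  -- the four linear characters give unit values
  have hu1 : MonoidAlgebra.lift ℤ ℤ SD16 chiA cu = 1 ∨ MonoidAlgebra.lift ℤ ℤ SD16 chiA cu = -1 := by
    apply Int.isUnit_iff.1
    exact IsUnit.of_mul_eq_one _ (by rw [← map_mul, huv, map_one])
  have hu2 : MonoidAlgebra.lift ℤ ℤ SD16 chiB cu = 1 ∨ MonoidAlgebra.lift ℤ ℤ SD16 chiB cu = -1 := by
    apply Int.isUnit_iff.1
    exact IsUnit.of_mul_eq_one _ (by rw [← map_mul, huv, map_one])
  have hu3 : MonoidAlgebra.lift ℤ ℤ SD16 chiAB cu = 1 ∨ MonoidAlgebra.lift ℤ ℤ SD16 chiAB cu = -1 := by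
    apply Int.isUnit_iff.1
    exact IsUnit.of_mul_eq_one _ (by rw [← map_mul, huv, map_one])
  have hu0 : MonoidAlgebra.lift ℤ ℤ SD16 1 cu = 1 ∨ MonoidAlgebra.lift ℤ ℤ SD16 1 cu = -1 := by
    apply Int.isUnit_iff.1
    exact IsUnit.of_mul_eq_one _ (by rw [← map_mul, huv, map_one])
  rw [lift_eval] at hu0 hu1 hu2 hu3
  simp only [CA0, CA1, CA2, CA3, CA4, CA5, CA6, CA7, CA8, CA9, CA10, CA11, CA12, CA13, CA14, CA15] at hu1
  simp only [CB0, CB1, CB2, CB3, CB4, CB5, CB6, CB7, CB8, CB9, CB10, CB11, CB12, CB13, CB14, CB15] at hu2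
  simp only [CC0, CC1, CC2, CC3, CC4, CC5, CC6, CC7, CC8, CC9, CC10, CC11, CC12, CC13, CC14, CC15] at hu3
  simp only [MonoidHom.one_apply] at hu0
  simp only [zsmul_eq_mul, Int.cast_id, mul_one, mul_neg] at hu0 hu1 hu2 hu3
  rw [eu1, eu2, eu3, eu4, eu5, eu6, eu7, eu8, eu9] at hu0 hu1 hu2 hu3
  -- the 2-dimensional representation
  have hp2 : MonoidAlgebra.lift ℤ _ SD16 rho2 cu * MonoidAlgebra.lift ℤ _ SD16 rho2 cv = 1 := by
    rw [← map_mul, huv, map_one]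
  rw [lift_eval, lift_eval] at hp2
  simp only [m2_0_0, m2_1_0, m2_2_0, m2_3_0, m2_4_0, m2_5_0, m2_6_0, m2_7_0,
    m2_0_1, m2_1_1, m2_2_1, m2_3_1, m2_4_1, m2_5_1, m2_6_1, m2_7_1] at hp2
  rw [eu1, eu2, eu3, eu4, eu5, eu6, eu7, eu8, eu9,
    ev1, ev2, ev3, ev4, ev5, ev6, ev7, ev8, ev9] at hp2
  have h2e := Matrix.ext_iff.mpr hp2
  have h200 := h2e 0 0
  simp [Matrix.mul_apply, Fin.sum_univ_two, Matrix.add_apply, Matrix.smul_apply,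
    Matrix.one_apply, zsmul_eq_mul, Int.cast_id] at h200
  -- the 4-dimensional representation
  have hp4 : MonoidAlgebra.lift ℤ _ SD16 rho4 cu * MonoidAlgebra.lift ℤ _ SD16 rho4 cv = 1 := by
    rw [← map_mul, huv, map_one]
  rw [lift_eval, lift_eval] at hp4
  simp only [m4_0_0, m4_1_0, m4_2_0, m4_3_0, m4_4_0, m4_5_0, m4_6_0, m4_7_0,
    m4_0_1, m4_1_1, m4_2_1, m4_3_1, m4_4_1, m4_5_1, m4_6_1, m4_7_1] at hp4
  rw [eu1, eu2, eu3, eu4, eu5, eu6, eu7, eu8, eu9,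
    ev1, ev2, ev3, ev4, ev5, ev6, ev7, ev8, ev9] at hp4
  have h4e := Matrix.ext_iff.mpr hp4
  have h400 := h4e 0 0
  have h410 := h4e 1 0
  simp [Matrix.mul_apply, Fin.sum_univ_four, Matrix.add_apply, Matrix.smul_apply,
    Matrix.one_apply, zsmul_eq_mul, Int.cast_id] at h400 h410
  clear hp2 hp4 h2e h4e hcent hv hu huv hvu ev1 ev2 ev3 ev4 ev5 ev6 ev7 ev8 ev9
  clear cj1 cj2 cj3 cj4 cj5 cj6 cj7 cj8 cj9
  -- extract the arithmetic consequences of the 4-dimensional representation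
  have keylemma : ∀ d e d' e' : ℤ, d * d' - 2 * (e * e') = 1 → e * d' + d * e' = 0 →
      e = 0 ∧ (d = 1 ∨ d = -1) := by
    intro d e d' e' h1 h2
    have key : (d ^ 2 + 2 * e ^ 2) * (d' ^ 2 + 2 * e' ^ 2) = 1 := by
      linear_combination (d * d' - 2 * (e * e') + 1) * h1 + (2 * (e * d' + d * e')) * h2
    rcases Int.isUnit_iff.1 (IsUnit.of_mul_eq_one _ key) with h3 | h3
    · have he : e = 0 := by nlinarith [sq_nonneg d, sq_nonneg e, sq_nonneg d', sq_nonneg e']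
      have hd2 : d * d = 1 := by
        rw [he] at h3; nlinarith [h3]
      exact ⟨he, Int.isUnit_iff.1 (IsUnit.of_mul_eq_one _ hd2)⟩
    · exfalso; nlinarith [sq_nonneg d, sq_nonneg e, sq_nonneg d', sq_nonneg e']
  obtain ⟨he, hd⟩ := keylemma (cu.coeff (el 0 0) - cu.coeff (el 4 0)) (cu.coeff (el 1 0) - cu.coeff (el 5 0))
    (cv.coeff (el 0 0) - cv.coeff (el 4 0)) (cv.coeff (el 1 0) - cv.coeff (el 5 0))
    (by linear_combination h400) (by linear_combination h410)
  have hm := Int.isUnit_iff.1 (IsUnit.of_mul_eq_one _ h200)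
  -- solve the linear system
  have hvals : (cu.coeff (el 1 0) = 0 ∧ cu.coeff (el 2 0) = 0 ∧ cu.coeff (el 5 0) = 0 ∧ cu.coeff (el 6 1) = 0 ∧
      cu.coeff (el 7 1) = 0) ∧
      ((cu.coeff (el 0 0) = 1 ∧ cu.coeff (el 4 0) = 0) ∨ (cu.coeff (el 0 0) = 0 ∧ cu.coeff (el 4 0) = 1) ∨
       (cu.coeff (el 0 0) = -1 ∧ cu.coeff (el 4 0) = 0) ∨ (cu.coeff (el 0 0) = 0 ∧ cu.coeff (el 4 0) = -1)) := by
    rcases hu0 with h0 | h0 <;> rcases hu1 with h1 | h1 <;> rcases hu2 with h2 | h2 <;>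
      rcases hu3 with h3 | h3 <;> rcases hm with h5 | h5 <;> rcases hd with h6 | h6 <;>
        exact ⟨⟨by omega, by omega, by omega, by omega, by omega⟩, by omega⟩
  obtain ⟨⟨hS0, hR0, hT0, hW0, hZ0⟩, hPQ⟩ := hvals
  have hcen1 : el 0 0 ∈ Subgroup.center SD16 := Subgroup.mem_center_iff.2 (by decide)
  have hcen2 : el 4 0 ∈ Subgroup.center SD16 := Subgroup.mem_center_iff.2 (by decide)
  rcases hPQ with ⟨h1, h2⟩ | ⟨h1, h2⟩ | ⟨h1, h2⟩ | ⟨h1, h2⟩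
  · refine ⟨el 0 0, hcen1, Or.inl ?_⟩
    rw [MonoidAlgebra.of_apply]
    refine MonoidAlgebra.ext (Finsupp.ext fun x => ?_)
    rcases all16 x with rfl|rfl|rfl|rfl|rfl|rfl|rfl|rfl|rfl|rfl|rfl|rfl|rfl|rfl|rfl|rfl <;>
      first
      | (rw [MonoidAlgebra.coeff_single, Finsupp.single_apply, if_pos rfl]; omega)
      | (rw [MonoidAlgebra.coeff_single, Finsupp.single_apply, if_neg (by decide)]; omega)
  · refine ⟨el 4 0, hcen2, Or.inl ?_⟩
    rw [MonoidAlgebra.of_apply]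
    refine MonoidAlgebra.ext (Finsupp.ext fun x => ?_)
    rcases all16 x with rfl|rfl|rfl|rfl|rfl|rfl|rfl|rfl|rfl|rfl|rfl|rfl|rfl|rfl|rfl|rfl <;>
      first
      | (rw [MonoidAlgebra.coeff_single, Finsupp.single_apply, if_pos rfl]; omega)
      | (rw [MonoidAlgebra.coeff_single, Finsupp.single_apply, if_neg (by decide)]; omega)
  · refine ⟨el 0 0, hcen1, Or.inr ?_⟩
    rw [MonoidAlgebra.of_apply]
    refine MonoidAlgebra.ext (Finsupp.ext fun x => ?_)
    rcases all16 x with rfl|rfl|rfl|rfl|rfl|rfl|rfl|rfl|rfl|rfl|rfl|rfl|rfl|rfl|rfl|rfl <;>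
      first
      | (rw [MonoidAlgebra.coeff_neg, MonoidAlgebra.coeff_single, Finsupp.neg_apply, Finsupp.single_apply, if_pos rfl]; omega)
      | (rw [MonoidAlgebra.coeff_neg, MonoidAlgebra.coeff_single, Finsupp.neg_apply, Finsupp.single_apply, if_neg (by decide)]; omega)
  · refine ⟨el 4 0, hcen2, Or.inr ?_⟩
    rw [MonoidAlgebra.of_apply]
    refine MonoidAlgebra.ext (Finsupp.ext fun x => ?_)
    rcases all16 x with rfl|rfl|rfl|rfl|rfl|rfl|rfl|rfl|rfl|rfl|rfl|rfl|rfl|rfl|rfl|rfl <;>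
      first
      | (rw [MonoidAlgebra.coeff_neg, MonoidAlgebra.coeff_single, Finsupp.neg_apply, Finsupp.single_apply, if_pos rfl]; omega)
      | (rw [MonoidAlgebra.coeff_neg, MonoidAlgebra.coeff_single, Finsupp.neg_apply, Finsupp.single_apply, if_neg (by decide)]; omega)
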